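/- Suppose for every vector v in a set V ⊆ R^N, the constant vector v̄·1 (where v̄ = (1/N)∑_n v_n) also belongs to V. Then for any weight vector w in the simplex with nonincreasing entries, sup_{v ∈ V} GGF_w[v] = sup_{v ∈ V} GGF_{1/N}[v]; i.e., optimizing the Gini welfare over V reduces to optimizing the utilitarian (average) objective over V. -/

import Mathlib

/-!
Evaluating the Gini objective at the permutation that sorts `v` increasingly pairs the
nonincreasing weights with nondecreasing values, so Chebyshev's sum inequality bounds it by the
average of `v`. Conversely, on the constant vector `v̄ • 1`, which lies in `V`, the Gini objective
equals `v̄`. Hence each supremum dominates the other.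
-/

open Finset

noncomputable def GGF {N : ℕ} (w v : Fin N → ℝ) : ℝ :=
  Finset.univ.inf' Finset.univ_nonempty
    (fun σ : Equiv.Perm (Fin N) => ∑ n, w n * v (σ n))

section GGF

variable {N : ℕ} {w : Fin N → ℝ}

lemma GGF_le_sum_mul_comp_perm (v : Fin N → ℝ) (σ : Equiv.Perm (Fin N)) :
    GGF w v ≤ ∑ n, w n * v (σ n) :=
  Finset.inf'_le _ (Finset.mem_univ σ)

lemma GGF_const (hsum : ∑ n, w n = 1) (c : ℝ) : GGF w (fun _ => c) = c := by
  simp only [GGF, ← Finset.sum_mul, hsum, one_mul]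
  exact Finset.inf'_const _ c

lemma card_mul_GGF_le_sum_mul_sum (hw : Antitone w) (v : Fin N → ℝ) :
    (N : ℝ) * GGF w v ≤ (∑ n, w n) * ∑ n, v n := by
  set σ := Tuple.sort v
  have hchebyshev : (N : ℝ) * ∑ n, w n * v (σ n) ≤ (∑ n, w n) * ∑ n, v (σ n) := by
    simpa using (hw.antivary (Tuple.monotone_sort v)).card_mul_sum_le_sum_mul_sum
  calc (N : ℝ) * GGF w v ≤ (N : ℝ) * ∑ n, w n * v (σ n) :=
        mul_le_mul_of_nonneg_left (GGF_le_sum_mul_comp_perm v σ) N.cast_nonneg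
    _ ≤ (∑ n, w n) * ∑ n, v (σ n) := hchebyshev
    _ = (∑ n, w n) * ∑ n, v n := by rw [Equiv.sum_comp σ v]

lemma GGF_le_average (hw : Antitone w) (hsum : ∑ n, w n = 1) (v : Fin N → ℝ) :
    GGF w v ≤ (1 / N : ℝ) * ∑ n, v n := by
  have hN : (0 : ℝ) < N := by
    rcases Nat.eq_zero_or_pos N with rfl | hN
    · simp at hsum
    · exact_mod_cast hN
  rw [one_div_mul_eq_div, le_div_iff₀ hN, mul_comm]
  simpa [hsum] using card_mul_GGF_le_sum_mul_sum hw v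

end GGF

theorem stmt10_general {N : ℕ} (V : Set (Fin N → ℝ))
    (hcl : ∀ v ∈ V, (fun _ : Fin N => (1 / N : ℝ) * ∑ n, v n) ∈ V)
    (w : Fin N → ℝ) (hsum : ∑ n, w n = 1)
    (hanti : ∀ i j : Fin N, i ≤ j → w j ≤ w i) :
    sSup (GGF w '' V) = sSup ((fun v => (1 / N : ℝ) * ∑ n, v n) '' V) := by
  apply csSup_eq_csSup_of_forall_exists_le
  · rintro _ ⟨v, hv, rfl⟩
    exact ⟨_, ⟨v, hv, rfl⟩, GGF_le_average hanti hsum v⟩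
  · rintro _ ⟨v, hv, rfl⟩
    exact ⟨_, ⟨_, hcl v hv, rfl⟩, (GGF_const hsum _).ge⟩

theorem stmt10 {N : ℕ} (hN : 0 < N) (V : Set (Fin N → ℝ)) (hne : V.Nonempty)
    (hcl : ∀ v ∈ V, (fun _ : Fin N => (1 / N : ℝ) * ∑ n, v n) ∈ V)
    (w : Fin N → ℝ) (hw : ∀ n, 0 ≤ w n) (hsum : ∑ n, w n = 1)
    (hanti : ∀ i j : Fin N, i ≤ j → w j ≤ w i) :
    sSup (GGF w '' V) = sSup ((fun v => (1 / N : ℝ) * ∑ n, v n) '' V) :=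
  stmt10_general V hcl w hsum hanti
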